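/- arXiv:2604.11105 — 6 statements merged into one kernel-verified Lean document; each statement's English description precedes it below -/
import Mathlib

section
/- Let d ≥ 1, μ > 0, let φ : ℝ^d → ℝ be differentiable and μ-strongly convex, let S : ℝ^d → ℝ^d be monotone, and let z⋆ ∈ ℝ^d satisfy ∇φ(z⋆) + S(z⋆) = 0. Let z : ℝ → ℝ^d be twice differentiable and satisfy, for all t ≥ 0, the ODE z''(t) + 2√μ·z'(t) + ∇φ(z(t)) + S(z(t) + (1/√μ)·z'(t)) = 0. Define Ψ(t) = ‖z'(t) + √μ·(z(t) − z⋆)‖² + 2(φ(z(t)) − φ(z⋆) − ⟨∇φ(z⋆), z(t) − z⋆⟩). Then Ψ is differentiable on [0, ∞) and Ψ'(t) ≤ −√μ · Ψ(t) for all t ≥ 0. -/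
/-!
Write `v = z' + √μ (z - z⋆)`, so that `Ψ = ‖v‖² + 2 D_φ(z, z⋆)` with `D_φ` the Bregman
divergence. Differentiating and substituting the ODE gives
`Ψ' + √μ Ψ = -2⟪S w - S z⋆, v⟫ + 2√μ (D_φ(z, z⋆) - ⟪∇φ z - ∇φ z⋆, z - z⋆⟫ + μ/2 ‖z - z⋆‖²) - √μ ‖z'‖²`
with `w = z + z'/√μ`. Since `w - z⋆ = v/√μ`, the first term is `≤ 0` by monotonicity of `S`,
and the second is `≤ 0` by strong convexity of `φ`.
-/

open scoped RealInnerProductSpace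

section

variable {E : Type*} [NormedAddCommGroup E] [InnerProductSpace ℝ E]

noncomputable def bregmanDiv [CompleteSpace E] (φ : E → ℝ) (x x₀ : E) : ℝ :=
  φ x - φ x₀ - ⟪gradient φ x₀, x - x₀⟫

theorem HasDerivAt.bregmanDiv_comp [CompleteSpace E] {φ : E → ℝ} {z : ℝ → E} {v x₀ : E}
    {t : ℝ} (hφ : DifferentiableAt ℝ φ (z t)) (hz : HasDerivAt z v t) :
    HasDerivAt (fun τ => bregmanDiv φ (z τ) x₀) ⟪gradient φ (z t) - gradient φ x₀, v⟫ t := by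
  have hφz : HasDerivAt (φ ∘ z) ⟪gradient φ (z t), v⟫ t :=
    hφ.hasGradientAt.hasFDerivAt.comp_hasDerivAt t hz
  have hlin : HasDerivAt (fun τ => ⟪gradient φ x₀, z τ - x₀⟫) ⟪gradient φ x₀, v⟫ t := by
    simpa using (hasDerivAt_const t (gradient φ x₀)).inner ℝ (hz.sub_const x₀)
  rw [inner_sub_left]
  exact (hφz.sub_const (φ x₀)).sub hlin

theorem hasDerivAt_lyapunov [CompleteSpace E] {φ : E → ℝ} {z y : ℝ → E} {acc x₀ : E}
    {s t : ℝ} (hφ : DifferentiableAt ℝ φ (z t)) (hz : HasDerivAt z (y t) t)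
    (hy : HasDerivAt y acc t) :
    HasDerivAt (fun τ => ‖y τ + s • (z τ - x₀)‖ ^ 2 + 2 * bregmanDiv φ (z τ) x₀)
      (2 * ⟪y t + s • (z t - x₀), acc + s • y t⟫
        + 2 * ⟪gradient φ (z t) - gradient φ x₀, y t⟫) t :=
  (hy.add ((hz.sub_const x₀).const_smul s)).norm_sq.add ((hz.bregmanDiv_comp hφ).const_mul 2)

theorem bregmanDiv_le_of_strongly_convex [CompleteSpace E] {φ : E → ℝ} {μ : ℝ}
    (hφ : ∀ u v : E, φ v ≥ φ u + ⟪gradient φ u, v - u⟫ + μ / 2 * ‖v - u‖ ^ 2) (x x₀ : E) :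
    bregmanDiv φ x x₀ ≤ ⟪gradient φ x - gradient φ x₀, x - x₀⟫ - μ / 2 * ‖x - x₀‖ ^ 2 := by
  have h := hφ x x₀
  rw [← neg_sub x x₀, inner_neg_right, norm_neg] at h
  rw [bregmanDiv, inner_sub_left]
  linarith

theorem inner_add_smul_nonneg_of_monotone {S : E → E}
    (hS : ∀ u v : E, ⟪S u - S v, u - v⟫ ≥ 0) {s : ℝ} (hs : 0 < s) (x p x₀ : E) :
    0 ≤ ⟪S (x + (1 / s) • p) - S x₀, p + s • (x - x₀)⟫ := by
  have h := hS (x + (1 / s) • p) x₀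
  have hw : x + (1 / s) • p - x₀ = s⁻¹ • (p + s • (x - x₀)) := by
    rw [smul_add, smul_smul, inv_mul_cancel₀ hs.ne', one_smul, one_div]
    abel
  rw [hw, real_inner_smul_right] at h
  exact nonneg_of_mul_nonneg_right h (inv_pos.2 hs)

theorem lyapunov_rate_le {s D : ℝ} (hs : 0 ≤ s) {p q acc G G₀ T T₀ : E}
    (hacc : acc + (2 * s) • p + G + T = 0) (hstar : G₀ + T₀ = 0)
    (hmono : 0 ≤ ⟪T - T₀, p + s • q⟫)
    (hconv : D ≤ ⟪G - G₀, q⟫ - s ^ 2 / 2 * ‖q‖ ^ 2) :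
    2 * ⟪p + s • q, acc + s • p⟫ + 2 * ⟪G - G₀, p⟫ ≤ -s * (‖p + s • q‖ ^ 2 + 2 * D) := by
  have hacc' : acc = -((2 * s) • p + G + T) := eq_neg_iff_add_eq_zero.2 (by rw [← hacc]; abel)
  rw [hacc']
  rw [eq_neg_of_add_eq_zero_right hstar, sub_neg_eq_add] at hmono
  have hconv' := mul_le_mul_of_nonneg_left hconv hs
  simp only [norm_add_sq_real, norm_smul, mul_pow, Real.norm_of_nonneg hs, inner_add_left,
    inner_add_right, inner_sub_left, inner_neg_right, real_inner_smul_left,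
    real_inner_smul_right, real_inner_self_eq_norm_sq, real_inner_comm q p, real_inner_comm G p,
    real_inner_comm G q, real_inner_comm T p, real_inner_comm T q] at hmono hconv' ⊢
  linarith [mul_nonneg hs (sq_nonneg ‖p‖)]

end

theorem nod_ode_lyapunov_decrease_general
    (d : ℕ) (μ : ℝ) (hμ : 0 < μ)
    (φ : EuclideanSpace ℝ (Fin d) → ℝ)
    (S : EuclideanSpace ℝ (Fin d) → EuclideanSpace ℝ (Fin d))
    (zstar : EuclideanSpace ℝ (Fin d))
    (hφdiff : Differentiable ℝ φ)
    (hφsc : ∀ u v : EuclideanSpace ℝ (Fin d),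
      φ v ≥ φ u + ⟪gradient φ u, v - u⟫ + μ / 2 * ‖v - u‖ ^ 2)
    (hSmono : ∀ u v : EuclideanSpace ℝ (Fin d), ⟪S u - S v, u - v⟫ ≥ 0)
    (hstar : gradient φ zstar + S zstar = 0)
    (z : ℝ → EuclideanSpace ℝ (Fin d))
    (hz : Differentiable ℝ z) (hz' : Differentiable ℝ (deriv z))
    (hode : ∀ t : ℝ, 0 ≤ t →
      deriv (deriv z) t + (2 * Real.sqrt μ) • deriv z t + gradient φ (z t)
        + S (z t + (1 / Real.sqrt μ) • deriv z t) = 0)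
    (Ψ : ℝ → ℝ)
    (hΨ : ∀ t : ℝ, Ψ t = ‖deriv z t + Real.sqrt μ • (z t - zstar)‖ ^ 2
        + 2 * (φ (z t) - φ zstar - ⟪gradient φ zstar, z t - zstar⟫)) :
    ∀ t : ℝ, 0 ≤ t → DifferentiableAt ℝ Ψ t ∧ deriv Ψ t ≤ -Real.sqrt μ * Ψ t := by
  obtain rfl : Ψ = fun t => ‖deriv z t + √μ • (z t - zstar)‖ ^ 2 + 2 * bregmanDiv φ (z t) zstar :=
    funext hΨ
  intro t ht
  have hΨ' := hasDerivAt_lyapunov (s := √μ) (x₀ := zstar) (hφdiff (z t)) (hz t).hasDerivAt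
    (hz' t).hasDerivAt
  refine ⟨hΨ'.differentiableAt, hΨ'.deriv.trans_le ?_⟩
  have hconv := bregmanDiv_le_of_strongly_convex hφsc (z t) zstar
  rw [← Real.sq_sqrt hμ.le] at hconv
  exact lyapunov_rate_le (Real.sqrt_nonneg μ) (hode t ht) hstar
    (inner_add_smul_nonneg_of_monotone hSmono (Real.sqrt_pos.2 hμ) _ _ _) hconv

/-- Theorem 3.1 / `thm:ode` of the paper, differential form.
Under the NOD ODE, the Lyapunov function `Ψ` is differentiable on `[0, ∞)` and
satisfies `Ψ'(t) ≤ -√μ · Ψ(t)` there. -/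
theorem nod_ode_lyapunov_decrease
    (d : ℕ) (hd : 1 ≤ d) (μ : ℝ) (hμ : 0 < μ)
    (φ : EuclideanSpace ℝ (Fin d) → ℝ)
    (S : EuclideanSpace ℝ (Fin d) → EuclideanSpace ℝ (Fin d))
    (zstar : EuclideanSpace ℝ (Fin d))
    (hφdiff : Differentiable ℝ φ)
    (hφsc : ∀ u v : EuclideanSpace ℝ (Fin d),
      φ v ≥ φ u + ⟪gradient φ u, v - u⟫ + μ / 2 * ‖v - u‖ ^ 2)
    (hSmono : ∀ u v : EuclideanSpace ℝ (Fin d), ⟪S u - S v, u - v⟫ ≥ 0)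
    (hstar : gradient φ zstar + S zstar = 0)
    (z : ℝ → EuclideanSpace ℝ (Fin d))
    (hz : Differentiable ℝ z) (hz' : Differentiable ℝ (deriv z))
    (hode : ∀ t : ℝ, 0 ≤ t →
      deriv (deriv z) t + (2 * Real.sqrt μ) • deriv z t + gradient φ (z t)
        + S (z t + (1 / Real.sqrt μ) • deriv z t) = 0)
    (Ψ : ℝ → ℝ)
    (hΨ : ∀ t : ℝ, Ψ t = ‖deriv z t + Real.sqrt μ • (z t - zstar)‖ ^ 2
        + 2 * (φ (z t) - φ zstar - ⟪gradient φ zstar, z t - zstar⟫)) :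
    ∀ t : ℝ, 0 ≤ t → DifferentiableAt ℝ Ψ t ∧ deriv Ψ t ≤ -Real.sqrt μ * Ψ t :=
  nod_ode_lyapunov_decrease_general d μ hμ φ S zstar hφdiff hφsc hSmono hstar z hz hz' hode Ψ hΨ
end

section
/- Under the NOD setup (see context), for every integer k ≥ 2, Ψ_k ≥ (μ/2)·‖z̃_k + (1/√(ημ))(z̃_k − z_k) − z⋆‖² + φ̂(z̃_{k−1}) + (1 − ημ)·√(μ/η)·‖z̃_{k−1} − z_{k−1}‖². -/
/-!
Write `g_j = ∇φ(z̃_j) + S(ẑ_j)` and `w_k = z̃_k + (z̃_k − z_k)/√(ημ) − z⋆`. After cancelling the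
common terms, the claim says `η‖g_{k−1}‖² ≤ φ̂(z̃_{k−1}) + (μ/2)‖w_k‖²
+ Bη(1 − √(ημ))(1 − ηL_φ)‖g_{k−2}‖²`. Unwinding the three recursions gives
`ẑ_{k−1} − z⋆ = w_k + (η/√(ημ)) g_{k−1} − (1 − √(ημ))(η/√(ημ)) g_{k−2}`. Since
`g_{k−1} = (∇φ(z̃_{k−1}) − ∇φ(z⋆)) + (S(ẑ_{k−1}) − S(z⋆))`, cocoercivity of `∇φ`, the Lipschitz
bound on `S` and the step-size bounds `ηL_φ ≤ C`, `ηL_S² ≤ Cμ` give the linear estimate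
`(1 − √C)√η‖g_{k−1}‖ ≤ √C(√(2φ̂(z̃_{k−1})) + √μ‖w_k‖ + (1 − √(ημ))√η‖g_{k−2}‖)`.
The equation defining `C` forces `√C ≤ 1/6`, and for such `√C` a weighted Cauchy–Schwarz
inequality squares the linear estimate into the quadratic one.
-/

open scoped RealInnerProductSpace

section Gradient

variable {E : Type*} [NormedAddCommGroup E] [InnerProductSpace ℝ E] [CompleteSpace E]
  {φ : E → ℝ} {L μ : ℝ}

/-- The Bregman divergence of `φ` at `z`, the paper's `φ̂` for `z = z⋆`. -/
noncomputable def bregman (φ : E → ℝ) (z x : E) : ℝ := φ x - φ z - ⟪gradient φ z, x - z⟫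

theorem bregman_nonneg (hconv : ∀ u v, φ u + ⟪gradient φ u, v - u⟫ ≤ φ v) (z x : E) :
    0 ≤ bregman φ z x := by
  unfold bregman
  linarith [hconv z x]

theorem le_add_inner_gradient_add_of_lipschitz_gradient (hdiff : Differentiable ℝ φ)
    (hL : ∀ u v, ‖gradient φ u - gradient φ v‖ ≤ L * ‖u - v‖) (u v : E) :
    φ v ≤ φ u + ⟪gradient φ u, v - u⟫ + L / 2 * ‖v - u‖ ^ 2 := by
  set w := v - u
  let g : ℝ → ℝ := fun t => φ (u + t • w) - t * ⟪gradient φ u, w⟫ - L * t ^ 2 / 2 * ‖w‖ ^ 2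
  have hg : ∀ t : ℝ, HasDerivAt g
      (⟪gradient φ (u + t • w) - gradient φ u, w⟫ - L * t * ‖w‖ ^ 2) t := by
    intro t
    have hline : HasDerivAt (fun t : ℝ => u + t • w) w t := by
      simpa using ((hasDerivAt_id t).smul_const w).const_add u
    have hφ := ((hdiff _).hasGradientAt.hasFDerivAt).comp_hasDerivAt t hline
    rw [InnerProductSpace.toDual_apply_apply] at hφ
    refine ((hφ.sub ((hasDerivAt_id t).mul_const ⟪gradient φ u, w⟫)).sub
      ((((hasDerivAt_pow 2 t).const_mul L).div_const 2).mul_const (‖w‖ ^ 2))).congr_deriv ?_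
    simp only [inner_sub_left]
    push_cast
    ring
  have hanti : AntitoneOn g (Set.Icc 0 1) := by
    refine antitoneOn_of_hasDerivWithinAt_nonpos (convex_Icc 0 1)
      (fun t _ => (hg t).continuousAt.continuousWithinAt) (fun t _ => (hg t).hasDerivWithinAt) ?_
    intro t ht
    rw [interior_Icc] at ht
    calc ⟪gradient φ (u + t • w) - gradient φ u, w⟫ - L * t * ‖w‖ ^ 2
        ≤ L * ‖u + t • w - u‖ * ‖w‖ - L * t * ‖w‖ ^ 2 := by
          gcongr
          exact (real_inner_le_norm _ _).trans
            (mul_le_mul_of_nonneg_right (hL _ _) (norm_nonneg _))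
      _ = 0 := by
          rw [add_sub_cancel_left, norm_smul, Real.norm_of_nonneg ht.1.le]
          ring
  have h01 := hanti (Set.left_mem_Icc.2 zero_le_one) (Set.right_mem_Icc.2 zero_le_one) zero_le_one
  simp only [g, w, zero_smul, add_zero, one_smul, add_sub_cancel] at h01
  linarith

theorem norm_gradient_sub_sq_le_bregman (hdiff : Differentiable ℝ φ)
    (hconv : ∀ u v, φ u + ⟪gradient φ u, v - u⟫ ≤ φ v)
    (hL : ∀ u v, ‖gradient φ u - gradient φ v‖ ≤ L * ‖u - v‖) (hL0 : 0 < L) (z x : E) :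
    ‖gradient φ x - gradient φ z‖ ^ 2 ≤ 2 * L * bregman φ z x := by
  set G := gradient φ x - gradient φ z
  -- bound `φ` at the gradient step `x - G / L` above by descent and below by convexity at `z`
  have hup := le_add_inner_gradient_add_of_lipschitz_gradient hdiff hL x (x - L⁻¹ • G)
  have hlow := hconv z (x - L⁻¹ • G)
  rw [sub_sub_cancel_left, norm_neg, norm_smul, Real.norm_of_nonneg (inv_nonneg.2 hL0.le),
    inner_neg_right, real_inner_smul_right] at hup
  rw [sub_right_comm, inner_sub_right, real_inner_smul_right] at hlow
  have hGG : ⟪gradient φ x, G⟫ - ⟪gradient φ z, G⟫ = ‖G‖ ^ 2 := by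
    rw [← inner_sub_left, real_inner_self_eq_norm_sq]
  have hstep : L / 2 * (L⁻¹ * ‖G‖) ^ 2 = L⁻¹ / 2 * ‖G‖ ^ 2 := by field_simp
  have hdecrease : L⁻¹ / 2 * ‖G‖ ^ 2 ≤ bregman φ z x := by
    have := congrArg (L⁻¹ * ·) hGG
    simp only [mul_sub] at this
    unfold bregman
    linarith
  calc ‖G‖ ^ 2 = 2 * L * (L⁻¹ / 2 * ‖G‖ ^ 2) := by field_simp
    _ ≤ 2 * L * bregman φ z x := by gcongr

theorem mul_norm_sq_le_inner_gradient_sub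
    (hsc : ∀ u v, φ v ≥ φ u + ⟪gradient φ u, v - u⟫ + μ / 2 * ‖v - u‖ ^ 2) (u v : E) :
    μ * ‖v - u‖ ^ 2 ≤ ⟪gradient φ v - gradient φ u, v - u⟫ := by
  have huv := hsc u v
  have hvu := hsc v u
  rw [← neg_sub v u, inner_neg_right, norm_neg] at hvu
  rw [inner_sub_left]
  linarith

theorem le_of_strongConvex_of_lipschitz_gradient [Nontrivial E]
    (hsc : ∀ u v, φ v ≥ φ u + ⟪gradient φ u, v - u⟫ + μ / 2 * ‖v - u‖ ^ 2)
    (hL : ∀ u v, ‖gradient φ u - gradient φ v‖ ≤ L * ‖u - v‖) : μ ≤ L := by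
  obtain ⟨e, he⟩ := exists_ne (0 : E)
  have hpos : 0 < ‖e‖ ^ 2 := by positivity
  refine le_of_mul_le_mul_right ?_ hpos
  calc μ * ‖e‖ ^ 2 = μ * ‖e - 0‖ ^ 2 := by rw [sub_zero]
    _ ≤ ⟪gradient φ e - gradient φ 0, e - 0⟫ := mul_norm_sq_le_inner_gradient_sub hsc 0 e
    _ ≤ ‖gradient φ e - gradient φ 0‖ * ‖e - 0‖ := real_inner_le_norm _ _
    _ ≤ L * ‖e - 0‖ * ‖e - 0‖ := by gcongr; exact hL e 0
    _ = L * ‖e‖ ^ 2 := by rw [sub_zero]; ring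

end Gradient

theorem sq_le_of_mul_le_weighted_sum {s x u v t : ℝ} (hs0 : 0 ≤ s) (hs : s ≤ 1 / 6)
    (hx : 0 ≤ x) (h : (1 - s) * x ≤ s * (u + v + t)) :
    x ^ 2 ≤ u ^ 2 / 2 + v ^ 2 / 2 + s * t ^ 2 := by
  set Q := u ^ 2 / 2 + v ^ 2 / 2 + s * t ^ 2
  have hQ : 0 ≤ Q := by positivity
  -- weighted Cauchy–Schwarz with weights `2, 2, 1 / s`, cleared of denominators
  have hcs : s * (u + v + t) ^ 2 ≤ (4 * s + 1) * Q := by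
    have hsos : (4 * s + 1) * Q - s * (u + v + t) ^ 2
        = s * (u - v) ^ 2 + (u - 2 * s * t) ^ 2 / 2 + (v - 2 * s * t) ^ 2 / 2 := by
      ring
    linarith [mul_nonneg hs0 (sq_nonneg (u - v)), sq_nonneg (u - 2 * s * t),
      sq_nonneg (v - 2 * s * t)]
  have hsq : ((1 - s) * x) ^ 2 ≤ (s * (u + v + t)) ^ 2 :=
    pow_le_pow_left₀ (by nlinarith) h 2
  have hs1 : 0 < (1 - s) ^ 2 := by nlinarith
  refine le_of_mul_le_mul_left ?_ hs1
  calc (1 - s) ^ 2 * x ^ 2 = ((1 - s) * x) ^ 2 := by ring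
    _ ≤ s * (s * (u + v + t) ^ 2) := by linarith
    _ ≤ s * ((4 * s + 1) * Q) := by gcongr
    _ ≤ (1 - s) ^ 2 * Q := by nlinarith [mul_nonneg (by nlinarith : 0 ≤ 1 - 3 * s - 3 * s ^ 2) hQ]

namespace NOD

theorem constant_pos_and_sqrt_le {C : ℝ} (hC : 1 - C - √C * (C + 6) = 0) :
    0 < C ∧ √C ≤ 1 / 6 := by
  have hC0 : 0 < C := by
    by_contra! hneg
    rw [Real.sqrt_eq_zero'.2 hneg] at hC
    linarith
  have hs := Real.sq_sqrt hC0.le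
  exact ⟨hC0, by nlinarith [Real.sqrt_nonneg C]⟩

theorem extrapolation_eq {E : Type*} [AddCommGroup E] [Module ℝ E] {η a : ℝ} (ha : a ≠ 0)
    (ha' : 1 + a ≠ 0) {z ztil zhat g : ℕ → E}
    (hz : ∀ k, z (k + 1) = ztil k - η • g k)
    (hztil : ∀ k, ztil (k + 1) = z (k + 1) + ((1 - a) / (1 + a)) • (z (k + 1) - z k))
    (hzhat : ∀ k, zhat (k + 1) = ztil (k + 1) + (1 / a - 1) • (ztil (k + 1) - ztil k))
    (n : ℕ) :
    zhat (n + 1) = ztil (n + 2) + (1 / a) • (ztil (n + 2) - z (n + 2)) + (η / a) • g (n + 1)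
      - ((1 - a) * (η / a)) • g n := by
  have hztil_n : ztil n = z (n + 1) + η • g n := by rw [hz n]; abel
  rw [hzhat n, hztil (n + 1), hz (n + 1), hztil_n]
  match_scalars <;> field_simp <;> ring

theorem step_size_bounds {C η μ L LS : ℝ} (hC0 : 0 ≤ C) (hμ : 0 ≤ μ) (hL0 : 0 < L)
    (hη : η ≤ C * min (1 / L) (μ / LS ^ 2)) : η * L ≤ C ∧ η * LS ^ 2 ≤ C * μ := by
  refine ⟨?_, ?_⟩
  · rw [← le_div_iff₀ hL0, ← mul_one_div]
    exact hη.trans (mul_le_mul_of_nonneg_left (min_le_left _ _) hC0)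
  · rcases eq_or_ne LS 0 with hLS | hLS
    · rw [hLS, zero_pow two_ne_zero, mul_zero]
      positivity
    rw [← le_div_iff₀ (by positivity), mul_div_assoc]
    exact hη.trans (mul_le_mul_of_nonneg_left (min_le_right _ _) hC0)

variable {E : Type*} [NormedAddCommGroup E] [InnerProductSpace ℝ E] [CompleteSpace E]
  {φ : E → ℝ} {S : E → E} {zstar : E} {μ L LS η s B : ℝ}

theorem sqrt_mul_norm_le_of_extrapolation (hdiff : Differentiable ℝ φ)
    (hconv : ∀ u v, φ u + ⟪gradient φ u, v - u⟫ ≤ φ v)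
    (hL : ∀ u v, ‖gradient φ u - gradient φ v‖ ≤ L * ‖u - v‖) (hL0 : 0 < L)
    (hS : ∀ u v, ‖S u - S v‖ ≤ LS * ‖u - v‖) (hstar : gradient φ zstar + S zstar = 0)
    (hμ : 0 < μ) (hη : 0 < η) (hs0 : 0 ≤ s) (hηL : η * L ≤ s ^ 2)
    (hηLS : η * LS ^ 2 ≤ s ^ 2 * μ) (ha1 : √(η * μ) ≤ 1) {x y p g : E}
    (hy : y = p + (η / √(η * μ)) • (gradient φ x + S y)
      - ((1 - √(η * μ)) * (η / √(η * μ))) • g) :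
    (1 - s) * (√η * ‖gradient φ x + S y‖)
      ≤ s * (√(2 * bregman φ zstar x) + √μ * ‖p - zstar‖ + (1 - √(η * μ)) * (√η * ‖g‖)) := by
  set a := √(η * μ) with ha
  set G := ‖gradient φ x + S y‖
  set N := ‖gradient φ x - gradient φ zstar‖
  set H := ‖y - zstar‖
  have hD := bregman_nonneg hconv zstar x
  have hG : G ≤ N + LS * H := by
    simp only [G, N, H]
    rw [show gradient φ x + S y = (gradient φ x - gradient φ zstar) + (S y - S zstar) by
      rw [sub_add_sub_comm, hstar, sub_zero]]
    exact (norm_add_le _ _).trans (add_le_add_right (hS _ _) _)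
  have hN : √η * N ≤ s * √(2 * bregman φ zstar x) := by
    refine (pow_le_pow_iff_left₀ (by positivity) (by positivity) two_ne_zero).1 ?_
    rw [mul_pow, mul_pow, Real.sq_sqrt hη.le, Real.sq_sqrt (by positivity)]
    calc η * N ^ 2 ≤ η * (2 * L * bregman φ zstar x) :=
          mul_le_mul_of_nonneg_left (norm_gradient_sub_sq_le_bregman hdiff hconv hL hL0 _ _) hη.le
      _ = (η * L) * (2 * bregman φ zstar x) := by ring
      _ ≤ s ^ 2 * (2 * bregman φ zstar x) := by gcongr
  have hLS : √η * LS ≤ s * √μ := by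
    refine (le_abs_self _).trans (abs_le_of_sq_le_sq ?_ (by positivity))
    rwa [mul_pow, mul_pow, Real.sq_sqrt hη.le, Real.sq_sqrt hμ.le]
  have hH : √μ * H ≤ √μ * ‖p - zstar‖ + √η * G + (1 - a) * (√η * ‖g‖) := by
    have hstep : √μ * (η / a) = √η := by
      rw [ha, Real.sqrt_mul hη.le, ← Real.sq_sqrt hη.le, Real.sqrt_sq (Real.sqrt_nonneg η)]
      field_simp [(Real.sqrt_pos.2 hμ).ne', (Real.sqrt_pos.2 hη).ne']
    have hc : 0 ≤ (1 - a) * (η / a) := mul_nonneg (by linarith) (by positivity)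
    have htri : H ≤ ‖p - zstar‖ + (η / a) * G + ((1 - a) * (η / a)) * ‖g‖ := by
      calc H = ‖(p - zstar) + (η / a) • (gradient φ x + S y) - ((1 - a) * (η / a)) • g‖ := by
            simp only [H]; nth_rw 1 [hy]; congr 1; abel
        _ ≤ ‖p - zstar‖ + ‖(η / a) • (gradient φ x + S y)‖ + ‖((1 - a) * (η / a)) • g‖ :=
            norm_sub_le_of_le (norm_add_le _ _) le_rfl
        _ = ‖p - zstar‖ + (η / a) * G + ((1 - a) * (η / a)) * ‖g‖ := by
            rw [norm_smul, norm_smul, Real.norm_of_nonneg (by positivity), Real.norm_of_nonneg hc]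
    calc √μ * H ≤ √μ * (‖p - zstar‖ + (η / a) * G + ((1 - a) * (η / a)) * ‖g‖) := by gcongr
      _ = √μ * ‖p - zstar‖ + (√μ * (η / a)) * G + (1 - a) * ((√μ * (η / a)) * ‖g‖) := by ring
      _ = √μ * ‖p - zstar‖ + √η * G + (1 - a) * (√η * ‖g‖) := by rw [hstep]
  linarith [mul_le_mul_of_nonneg_left hG (Real.sqrt_nonneg η),
    mul_le_mul_of_nonneg_right hLS (norm_nonneg (y - zstar)), mul_le_mul_of_nonneg_left hH hs0]

theorem mul_norm_sq_le_of_extrapolation (hdiff : Differentiable ℝ φ)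
    (hconv : ∀ u v, φ u + ⟪gradient φ u, v - u⟫ ≤ φ v)
    (hL : ∀ u v, ‖gradient φ u - gradient φ v‖ ≤ L * ‖u - v‖) (hL0 : 0 < L)
    (hS : ∀ u v, ‖S u - S v‖ ≤ LS * ‖u - v‖) (hstar : gradient φ zstar + S zstar = 0)
    (hμ : 0 < μ) (hη : 0 < η) (hs0 : 0 ≤ s) (hs : s ≤ 1 / 6) (hB : B = s / (1 - s ^ 2))
    (hηL : η * L ≤ s ^ 2) (hηLS : η * LS ^ 2 ≤ s ^ 2 * μ) (ha1 : √(η * μ) ≤ 1) {x y p g : E}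
    (hy : y = p + (η / √(η * μ)) • (gradient φ x + S y)
      - ((1 - √(η * μ)) * (η / √(η * μ))) • g) :
    η * ‖gradient φ x + S y‖ ^ 2 ≤ bregman φ zstar x + μ / 2 * ‖p - zstar‖ ^ 2
      + B * η * (1 - √(η * μ)) * (1 - η * L) * ‖g‖ ^ 2 := by
  have hsq := sq_le_of_mul_le_weighted_sum hs0 hs (by positivity)
    (sqrt_mul_norm_le_of_extrapolation hdiff hconv hL hL0 hS hstar hμ hη hs0 hηL hηLS ha1 hy)
  rw [mul_pow, mul_pow, mul_pow, mul_pow, Real.sq_sqrt hη.le, Real.sq_sqrt hμ.le,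
    Real.sq_sqrt (by linarith [bregman_nonneg hconv zstar x])] at hsq
  have hBs : s ≤ B * (1 - η * L) := by
    have h1 : 0 < 1 - s ^ 2 := by nlinarith
    rw [hB, div_mul_eq_mul_div, le_div_iff₀ h1]
    gcongr
  have hbudget : s * (1 - √(η * μ)) ^ 2 ≤ B * (1 - √(η * μ)) * (1 - η * L) := by
    have h1 := mul_le_mul_of_nonneg_right hBs (sub_nonneg.2 ha1)
    have h2 := mul_nonneg (mul_nonneg hs0 (sub_nonneg.2 ha1)) (Real.sqrt_nonneg (η * μ))
    linarith
  linarith [mul_le_mul_of_nonneg_right hbudget (by positivity : 0 ≤ η * ‖g‖ ^ 2)]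

end NOD

theorem nod_lyapunov_lower_bound_general
    (d : ℕ) (hd : 1 ≤ d) (μ Lφ LS : ℝ) (hμ : 0 < μ)
    (φ : EuclideanSpace ℝ (Fin d) → ℝ)
    (S : EuclideanSpace ℝ (Fin d) → EuclideanSpace ℝ (Fin d))
    (zstar : EuclideanSpace ℝ (Fin d))
    (hφdiff : Differentiable ℝ φ)
    (hφsc : ∀ u v : EuclideanSpace ℝ (Fin d),
      φ v ≥ φ u + ⟪gradient φ u, v - u⟫ + μ / 2 * ‖v - u‖ ^ 2)
    (hφsmooth : ∀ u v : EuclideanSpace ℝ (Fin d),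
      ‖gradient φ u - gradient φ v‖ ≤ Lφ * ‖u - v‖)
    (hSlip : ∀ u v : EuclideanSpace ℝ (Fin d), ‖S u - S v‖ ≤ LS * ‖u - v‖)
    (hstar : gradient φ zstar + S zstar = 0)
    (C B η : ℝ)
    (hCeq : 1 - C - Real.sqrt C * (C + 6) = 0)
    (hB : B = Real.sqrt C / (1 - C))
    (hη : 0 < η) (hηle : η ≤ C * min (1 / Lφ) (μ / LS ^ 2))
    (z ztil zhat : ℕ → EuclideanSpace ℝ (Fin d))
    (hrec1 : ∀ k : ℕ, z (k + 1) = ztil k - η • (gradient φ (ztil k) + S (zhat k)))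
    (hrec2 : ∀ k : ℕ, ztil (k + 1) = z (k + 1)
      + ((1 - Real.sqrt (η * μ)) / (1 + Real.sqrt (η * μ))) • (z (k + 1) - z k))
    (hrec3 : ∀ k : ℕ, zhat (k + 1) = ztil (k + 1)
      + (1 / Real.sqrt (η * μ) - 1) • (ztil (k + 1) - ztil k))
    (Ψ : ℕ → ℝ)
    (hΨ : ∀ k : ℕ, 2 ≤ k → Ψ k =
      μ * ‖ztil k + (1 / Real.sqrt (η * μ)) • (ztil k - z k) - zstar‖ ^ 2
      + 2 * (φ (ztil (k - 1)) - φ zstar - ⟪gradient φ zstar, ztil (k - 1) - zstar⟫)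
      - η * ‖gradient φ (ztil (k - 1)) + S (zhat (k - 1))‖ ^ 2
      + (1 - η * μ) * Real.sqrt (μ / η) * ‖ztil (k - 1) - z (k - 1)‖ ^ 2
      + B * η * (1 - Real.sqrt (η * μ)) * (1 - η * Lφ)
        * ‖gradient φ (ztil (k - 2)) + S (zhat (k - 2))‖ ^ 2) :
    ∀ k : ℕ, 2 ≤ k → Ψ k ≥
      μ / 2 * ‖ztil k + (1 / Real.sqrt (η * μ)) • (ztil k - z k) - zstar‖ ^ 2
      + (φ (ztil (k - 1)) - φ zstar - ⟪gradient φ zstar, ztil (k - 1) - zstar⟫)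
      + (1 - η * μ) * Real.sqrt (μ / η) * ‖ztil (k - 1) - z (k - 1)‖ ^ 2 := by
  have : Nonempty (Fin d) := ⟨⟨0, hd⟩⟩
  have hμL := le_of_strongConvex_of_lipschitz_gradient hφsc hφsmooth
  have hL0 : 0 < Lφ := hμ.trans_le hμL
  have hconv : ∀ u v, φ u + ⟪gradient φ u, v - u⟫ ≤ φ v := fun u v => by
    linarith [hφsc u v, mul_nonneg (half_pos hμ).le (sq_nonneg ‖v - u‖)]
  obtain ⟨hC0, hs⟩ := NOD.constant_pos_and_sqrt_le hCeq
  have hsC := Real.sq_sqrt hC0.le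
  obtain ⟨hηL, hηLS⟩ := NOD.step_size_bounds hC0.le hμ.le hL0 hηle
  have ha1 : √(η * μ) ≤ 1 := by
    rw [Real.sqrt_le_one]
    nlinarith [mul_le_mul_of_nonneg_left hμL hη.le]
  intro k hk
  obtain ⟨n, rfl⟩ : ∃ n, k = n + 2 := ⟨k - 2, by omega⟩
  have hzhat := NOD.extrapolation_eq (g := fun k => gradient φ (ztil k) + S (zhat k))
    (Real.sqrt_pos.2 (by positivity)).ne' (by positivity) hrec1 hrec2 hrec3 n
  have hgrad := NOD.mul_norm_sq_le_of_extrapolation hφdiff hconv hφsmooth hL0 hSlip hstar hμ hη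
    (Real.sqrt_nonneg C) hs (B := B) (by rwa [hsC]) (by rwa [hsC]) (by rwa [hsC]) ha1 hzhat
  rw [hΨ _ hk, show n + 2 - 1 = n + 1 by omega, show n + 2 - 2 = n by omega]
  unfold bregman at hgrad
  linarith

/-- Lemma 4.2 / `lem:discretizevalid` of the paper.
Under the NOD setup, for all `k ≥ 2`,
`Ψ_k ≥ (μ/2)‖z̃_k + (1/√(ημ))(z̃_k − z_k) − z⋆‖² + φ̂(z̃_{k−1})
  + (1 − ημ)√(μ/η)‖z̃_{k−1} − z_{k−1}‖²`. -/
theorem nod_lyapunov_lower_bound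
    (d : ℕ) (hd : 1 ≤ d) (μ Lφ LS : ℝ) (hμ : 0 < μ) (hLφ : 0 < Lφ) (hLS : 0 < LS)
    (φ : EuclideanSpace ℝ (Fin d) → ℝ)
    (S : EuclideanSpace ℝ (Fin d) → EuclideanSpace ℝ (Fin d))
    (zstar : EuclideanSpace ℝ (Fin d))
    (hφdiff : Differentiable ℝ φ)
    (hφsc : ∀ u v : EuclideanSpace ℝ (Fin d),
      φ v ≥ φ u + ⟪gradient φ u, v - u⟫ + μ / 2 * ‖v - u‖ ^ 2)
    (hφsmooth : ∀ u v : EuclideanSpace ℝ (Fin d),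
      ‖gradient φ u - gradient φ v‖ ≤ Lφ * ‖u - v‖)
    (hSmono : ∀ u v : EuclideanSpace ℝ (Fin d), ⟪S u - S v, u - v⟫ ≥ 0)
    (hSlip : ∀ u v : EuclideanSpace ℝ (Fin d), ‖S u - S v‖ ≤ LS * ‖u - v‖)
    (hstar : gradient φ zstar + S zstar = 0)
    (C B η : ℝ)
    (hC0 : 0 < C) (hC1 : C < 1)
    (hCeq : 1 - C - Real.sqrt C * (C + 6) = 0)
    (hB : B = Real.sqrt C / (1 - C))
    (hη : 0 < η) (hηle : η ≤ C * min (1 / Lφ) (μ / LS ^ 2))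
    (z ztil zhat : ℕ → EuclideanSpace ℝ (Fin d))
    (hinit1 : ztil 0 = z 0) (hinit2 : zhat 0 = z 0)
    (hrec1 : ∀ k : ℕ, z (k + 1) = ztil k - η • (gradient φ (ztil k) + S (zhat k)))
    (hrec2 : ∀ k : ℕ, ztil (k + 1) = z (k + 1)
      + ((1 - Real.sqrt (η * μ)) / (1 + Real.sqrt (η * μ))) • (z (k + 1) - z k))
    (hrec3 : ∀ k : ℕ, zhat (k + 1) = ztil (k + 1)
      + (1 / Real.sqrt (η * μ) - 1) • (ztil (k + 1) - ztil k))
    (Ψ : ℕ → ℝ)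
    (hΨ : ∀ k : ℕ, 2 ≤ k → Ψ k =
      μ * ‖ztil k + (1 / Real.sqrt (η * μ)) • (ztil k - z k) - zstar‖ ^ 2
      + 2 * (φ (ztil (k - 1)) - φ zstar - ⟪gradient φ zstar, ztil (k - 1) - zstar⟫)
      - η * ‖gradient φ (ztil (k - 1)) + S (zhat (k - 1))‖ ^ 2
      + (1 - η * μ) * Real.sqrt (μ / η) * ‖ztil (k - 1) - z (k - 1)‖ ^ 2
      + B * η * (1 - Real.sqrt (η * μ)) * (1 - η * Lφ)
        * ‖gradient φ (ztil (k - 2)) + S (zhat (k - 2))‖ ^ 2) :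
    ∀ k : ℕ, 2 ≤ k → Ψ k ≥
      μ / 2 * ‖ztil k + (1 / Real.sqrt (η * μ)) • (ztil k - z k) - zstar‖ ^ 2
      + (φ (ztil (k - 1)) - φ zstar - ⟪gradient φ zstar, ztil (k - 1) - zstar⟫)
      + (1 - η * μ) * Real.sqrt (μ / η) * ‖ztil (k - 1) - z (k - 1)‖ ^ 2 :=
  nod_lyapunov_lower_bound_general d hd μ Lφ LS hμ φ S zstar hφdiff hφsc hφsmooth hSlip hstar C B η
    hCeq hB hη hηle z ztil zhat hrec1 hrec2 hrec3 Ψ hΨ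
end

section
/- Let d ≥ 1, L > 0, let A : ℝ^d → ℝ^d be monotone and L-Lipschitz, and let k : ℝ^d → ℝ be convex. Suppose that for all z₁, z₂ ∈ ℝ^d and all g₁, g₂ ∈ ℝ^d such that g₁ is a subgradient of k at z₁ and g₂ is a subgradient of k at z₂, one has ⟨(A(z₁) − g₁) − (A(z₂) − g₂), z₁ − z₂⟩ ≥ 0 (i.e., A − ∂k is monotone). Then k is differentiable at every point of ℝ^d and its gradient map z ↦ ∇k(z) is L-Lipschitz. -/
/-!
Monotonicity of `A − ∂k` and the Lipschitz bound on `A` give, for subgradients `gᵢ ∈ ∂k(zᵢ)`,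
the one-sided bound `⟪g₁ - g₂, z₁ - z₂⟫ ≤ L ‖z₁ - z₂‖²`. Sandwiching `k y - k x - ⟪g x, y - x⟫`
between `0` (convexity) and `⟪g y - g x, y - x⟫ ≤ L ‖y - x‖²` shows that `k` is differentiable with
`∇k = g`. Integrating the one-sided bound along segments gives the descent inequality
`k w ≤ k z + ⟪∇k z, w - z⟫ + L/2 ‖w - z‖²`, and comparing it at `w = b - L⁻¹ (∇k b - ∇k a)` with
the subgradient inequality at `a` yields cocoercivity
`‖∇k u - ∇k v‖² ≤ L ⟪∇k u - ∇k v, u - v⟫`, hence the Lipschitz bound by Cauchy–Schwarz.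
-/

open scoped RealInnerProductSpace

section
variable {E : Type*} [NormedAddCommGroup E] [InnerProductSpace ℝ E]

def HasSubgradientAt (k : E → ℝ) (g z : E) : Prop := ∀ w, k w ≥ k z + ⟪g, w - z⟫

theorem ConvexOn.exists_hasSubgradientAt [FiniteDimensional ℝ E] {k : E → ℝ}
    (hk : ConvexOn ℝ Set.univ k) (z : E) : ∃ g, HasSubgradientAt k g z := by
  have hcont : Continuous k := continuousOn_univ.mp (hk.continuousOn isOpen_univ)
  have hopen : IsOpen {p : E × ℝ | p.1 ∈ Set.univ ∧ k p.1 < p.2} := by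
    simp only [Set.mem_univ, true_and]
    exact isOpen_lt (hcont.comp continuous_fst) continuous_snd
  -- The separating hyperplane through `(z, k z)` is non-vertical (`c < 0`), hence a graph.
  obtain ⟨f, hf⟩ := geometric_hahn_banach_open_point hk.convex_strict_epigraph hopen
    (x := (z, k z)) (by simp)
  set φ := f.comp (ContinuousLinearMap.inl ℝ E ℝ)
  set c := f (0, 1)
  have hf_apply : ∀ x t, f (x, t) = φ x + t * c := fun x t => by
    have hxt : (x, t) = (x, 0) + t • ((0 : E), (1 : ℝ)) := by simp
    rw [hxt, map_add, map_smul, smul_eq_mul]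
    rfl
  have hc : c < 0 := by
    have := hf (z, k z + 1) (by simp)
    rw [hf_apply, hf_apply] at this
    linarith
  refine ⟨(InnerProductSpace.toDual ℝ E).symm ((-c)⁻¹ • φ), fun w => le_of_forall_gt fun t ht => ?_⟩
  have hsep := hf (w, t) ⟨trivial, ht⟩
  rw [hf_apply, hf_apply] at hsep
  rw [InnerProductSpace.toDual_symm_apply, smul_apply, smul_eq_mul, map_sub,
    ← lt_sub_iff_add_lt', inv_mul_lt_iff₀ (neg_pos.2 hc)]
  linarith

theorem real_inner_le_mul_sq_of_inner_sub_nonneg {a g u : E} {L : ℝ} (h : 0 ≤ ⟪a - g, u⟫)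
    (ha : ‖a‖ ≤ L * ‖u‖) : ⟪g, u⟫ ≤ L * ‖u‖ ^ 2 :=
  calc ⟪g, u⟫ ≤ ⟪a, u⟫ := by rw [inner_sub_left] at h; linarith
    _ ≤ ‖a‖ * ‖u‖ := real_inner_le_norm a u
    _ ≤ L * ‖u‖ ^ 2 := by nlinarith [norm_nonneg u]

variable {k : E → ℝ} {g : E → E} {L : ℝ}

theorem sq_norm_sub_le_of_quadratic_upper_bound (hL : 0 < L)
    (hg : ∀ z, HasSubgradientAt k (g z) z)
    (hup : ∀ z w, k w ≤ k z + ⟪g z, w - z⟫ + L / 2 * ‖w - z‖ ^ 2) (a b : E) :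
    ‖g b - g a‖ ^ 2 ≤ 2 * L * (k b - k a - ⟪g a, b - a⟫) := by
  set δ := g b - g a
  have hlow := hg a (b - L⁻¹ • δ)
  have hhigh := hup b (b - L⁻¹ • δ)
  rw [sub_sub_cancel_left, inner_neg_right, norm_neg, real_inner_smul_right, norm_smul,
    Real.norm_eq_abs, abs_of_pos (inv_pos.2 hL)] at hhigh
  rw [sub_right_comm, inner_sub_right, real_inner_smul_right] at hlow
  have hδ : L⁻¹ * ⟪g b, δ⟫ - L⁻¹ * ⟪g a, δ⟫ = L⁻¹ * ‖δ‖ ^ 2 := by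
    rw [← mul_sub, ← inner_sub_left, real_inner_self_eq_norm_sq]
  have hsq : L / 2 * (L⁻¹ * ‖δ‖) ^ 2 = L⁻¹ * ‖δ‖ ^ 2 / 2 := by field_simp
  have : L⁻¹ * ‖δ‖ ^ 2 / 2 ≤ k b - k a - ⟪g a, b - a⟫ := by linarith
  calc ‖δ‖ ^ 2 = 2 * L * (L⁻¹ * ‖δ‖ ^ 2 / 2) := by field_simp
    _ ≤ _ := by gcongr

theorem norm_sub_le_of_quadratic_upper_bound (hL : 0 < L)
    (hg : ∀ z, HasSubgradientAt k (g z) z)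
    (hup : ∀ z w, k w ≤ k z + ⟪g z, w - z⟫ + L / 2 * ‖w - z‖ ^ 2) (u v : E) :
    ‖g u - g v‖ ≤ L * ‖u - v‖ := by
  have hcoco : ‖g u - g v‖ ^ 2 ≤ L * ⟪g u - g v, u - v⟫ := by
    have h₁ := sq_norm_sub_le_of_quadratic_upper_bound hL hg hup u v
    have h₂ := sq_norm_sub_le_of_quadratic_upper_bound hL hg hup v u
    rw [norm_sub_rev, ← neg_sub u v, inner_neg_right] at h₁
    simp only [inner_sub_left] at *
    nlinarith
  rcases (norm_nonneg (g u - g v)).eq_or_lt with h0 | hpos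
  · rw [← h0]; positivity
  · have := real_inner_le_norm (g u - g v) (u - v)
    nlinarith

variable [CompleteSpace E]

theorem hasGradientAt_of_hasSubgradientAt (hg : ∀ z, HasSubgradientAt k (g z) z)
    (hgL : ∀ x y, ⟪g x - g y, x - y⟫ ≤ L * ‖x - y‖ ^ 2) (x : E) : HasGradientAt k (g x) x := by
  rw [hasGradientAt_iff_isLittleO]
  refine Asymptotics.IsBigO.trans_isLittleO (Asymptotics.IsBigO.of_bound L
    (Filter.Eventually.of_forall fun y => ?_)) (Asymptotics.isLittleO_pow_sub_sub x one_lt_two)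
  have hsub_y : k x ≥ k y + ⟪g y, x - y⟫ := hg y x
  have hmono := hgL y x
  rw [← neg_sub y x, inner_neg_right] at hsub_y
  rw [inner_sub_left] at hmono
  have hlow : 0 ≤ k y - k x - ⟪g x, y - x⟫ := by linarith [hg x y]
  rw [Real.norm_eq_abs, abs_of_nonneg hlow, norm_pow, norm_norm]
  linarith

theorem le_add_inner_add_sq_of_hasSubgradientAt (hg : ∀ z, HasSubgradientAt k (g z) z)
    (hgL : ∀ x y, ⟪g x - g y, x - y⟫ ≤ L * ‖x - y‖ ^ 2) (z w : E) :
    k w ≤ k z + ⟪g z, w - z⟫ + L / 2 * ‖w - z‖ ^ 2 := by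
  set u := w - z
  set ψ : ℝ → ℝ := fun t => L / 2 * t ^ 2 * ‖u‖ ^ 2 + t * ⟪g z, u⟫ - k (z + t • u)
  have hψ : ∀ t, HasDerivAt ψ (L * t * ‖u‖ ^ 2 + ⟪g z, u⟫ - ⟪g (z + t • u), u⟫) t := by
    intro t
    have hline : HasDerivAt (fun s : ℝ => z + s • u) u t := by
      simpa using ((hasDerivAt_id t).smul_const u).const_add z
    have hk := (hasGradientAt_of_hasSubgradientAt hg hgL (z + t • u)).hasFDerivAt.comp_hasDerivAt
      t hline
    refine ((((hasDerivAt_pow 2 t).const_mul (L / 2)).mul_const (‖u‖ ^ 2)).add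
      ((hasDerivAt_id t).mul_const ⟪g z, u⟫) |>.sub hk).congr_deriv ?_
    simp only [InnerProductSpace.toDual_apply_apply]
    ring
  have hψ_nonneg : ∀ t ∈ interior (Set.Ici (0 : ℝ)),
      0 ≤ L * t * ‖u‖ ^ 2 + ⟪g z, u⟫ - ⟪g (z + t • u), u⟫ := by
    intro t ht
    rw [interior_Ici, Set.mem_Ioi] at ht
    have h := hgL (z + t • u) z
    rw [add_sub_cancel_left, real_inner_smul_right, inner_sub_left, norm_smul,
      Real.norm_eq_abs, abs_of_pos ht] at h
    nlinarith
  have hmono := monotoneOn_of_hasDerivWithinAt_nonneg (convex_Ici 0)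
    (fun t _ => (hψ t).continuousAt.continuousWithinAt) (fun t _ => (hψ t).hasDerivWithinAt)
    hψ_nonneg
  have h01 := hmono Set.self_mem_Ici (Set.mem_Ici.2 zero_le_one) zero_le_one
  simp only [ψ, one_smul, zero_smul, add_zero, u, add_sub_cancel] at h01
  linarith
end

theorem smooth_of_monotone_residual_general
    (d : ℕ) (L : ℝ) (hL : 0 < L)
    (A : EuclideanSpace ℝ (Fin d) → EuclideanSpace ℝ (Fin d))
    (hAlip : ∀ u v : EuclideanSpace ℝ (Fin d), ‖A u - A v‖ ≤ L * ‖u - v‖)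
    (k : EuclideanSpace ℝ (Fin d) → ℝ)
    (hkconvex : ConvexOn ℝ Set.univ k)
    (hmono : ∀ z₁ z₂ g₁ g₂ : EuclideanSpace ℝ (Fin d),
      (∀ w, k w ≥ k z₁ + ⟪g₁, w - z₁⟫) →
      (∀ w, k w ≥ k z₂ + ⟪g₂, w - z₂⟫) →
      ⟪(A z₁ - g₁) - (A z₂ - g₂), z₁ - z₂⟫ ≥ 0) :
    Differentiable ℝ k ∧
      ∀ u v : EuclideanSpace ℝ (Fin d), ‖gradient k u - gradient k v‖ ≤ L * ‖u - v‖ := by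
  choose g hg using hkconvex.exists_hasSubgradientAt
  have hgL : ∀ x y, ⟪g x - g y, x - y⟫ ≤ L * ‖x - y‖ ^ 2 := fun x y =>
    real_inner_le_mul_sq_of_inner_sub_nonneg
      (by simpa only [sub_sub_sub_comm] using hmono x y (g x) (g y) (hg x) (hg y)) (hAlip x y)
  have hgrad := hasGradientAt_of_hasSubgradientAt hg hgL
  refine ⟨fun x => (hgrad x).differentiableAt, fun u v => ?_⟩
  rw [(hgrad u).gradient, (hgrad v).gradient]
  exact norm_sub_le_of_quadratic_upper_bound hL hg
    (le_add_inner_add_sq_of_hasSubgradientAt hg hgL) u v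

/-- Lemma A.1 / `lem:kissmooth` of the paper.
If `A` is monotone and `L`-Lipschitz, `k` is convex, and `A − ∂k` is monotone,
then `k` is differentiable everywhere and its gradient is `L`-Lipschitz. -/
theorem smooth_of_monotone_residual
    (d : ℕ) (hd : 1 ≤ d) (L : ℝ) (hL : 0 < L)
    (A : EuclideanSpace ℝ (Fin d) → EuclideanSpace ℝ (Fin d))
    (hAmono : ∀ u v : EuclideanSpace ℝ (Fin d), ⟪A u - A v, u - v⟫ ≥ 0)
    (hAlip : ∀ u v : EuclideanSpace ℝ (Fin d), ‖A u - A v‖ ≤ L * ‖u - v‖)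
    (k : EuclideanSpace ℝ (Fin d) → ℝ)
    (hkconvex : ConvexOn ℝ Set.univ k)
    (hmono : ∀ z₁ z₂ g₁ g₂ : EuclideanSpace ℝ (Fin d),
      (∀ w, k w ≥ k z₁ + ⟪g₁, w - z₁⟫) →
      (∀ w, k w ≥ k z₂ + ⟪g₂, w - z₂⟫) →
      ⟪(A z₁ - g₁) - (A z₂ - g₂), z₁ - z₂⟫ ≥ 0) :
    Differentiable ℝ k ∧
      ∀ u v : EuclideanSpace ℝ (Fin d), ‖gradient k u - gradient k v‖ ≤ L * ‖u - v‖ :=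
  smooth_of_monotone_residual_general d L hL A hAlip k hkconvex hmono
end

section
/- Let k : ℝ² → ℝ be convex and differentiable everywhere, let x₀ ≤ x₁ and y₀ ≤ y₁ be real numbers, and suppose there exists v ∈ ℝ² such that ∇k(x, y) = v for every point (x, y) on the boundary of the axis-aligned rectangle [x₀, x₁] × [y₀, y₁] (i.e., every (x, y) in the rectangle with x ∈ {x₀, x₁} or y ∈ {y₀, y₁}). Then ∇k(x, y) = v for every (x, y) ∈ [x₀, x₁] × [y₀, y₁]. -/
open scoped RealInnerProductSpace

/-!
Subtracting the linear function `⟪v, ·⟫` turns the two boundary points on the horizontal line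
through `p` into critical points, hence global minimisers, of a convex function. Convexity
along the segment joining them forces `p` to be a minimiser as well, so the gradient at `p`
is `v` too.
-/

open Set

section FirstOrder

variable {E : Type*} [NormedAddCommGroup E] [NormedSpace ℝ E] {f : E → ℝ}

theorem ConvexOn.isMinOn_of_hasFDerivAt_eq_zero (hf : ConvexOn ℝ univ f) {a : E}
    (ha : HasFDerivAt f (0 : E →L[ℝ] ℝ) a) : IsMinOn f univ a := by
  intro x _
  set φ : ℝ → ℝ := f ∘ AffineMap.lineMap a x
  have hφ : ConvexOn ℝ univ φ := by
    simpa using hf.comp_affineMap (AffineMap.lineMap a x)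
  have hφ' : HasDerivAt φ 0 0 := by
    simpa using (AffineMap.lineMap_apply_zero (k := ℝ) a x ▸ ha).comp_hasDerivAt (0 : ℝ)
      AffineMap.hasDerivAt_lineMap
  simpa [φ, slope_def_field] using
    hφ.le_slope_of_hasDerivAt (mem_univ 0) (mem_univ 1) one_pos hφ'

theorem ConvexOn.hasFDerivAt_of_mem_segment (hf : ConvexOn ℝ univ f) {f' : E →L[ℝ] ℝ}
    {a b z : E} (ha : HasFDerivAt f f' a) (hb : HasFDerivAt f f' b)
    (hz : DifferentiableAt ℝ f z) (hzab : z ∈ segment ℝ a b) : HasFDerivAt f f' z := by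
  set g : E → ℝ := f - f'
  have hg : ConvexOn ℝ univ g := hf.sub (f'.toLinearMap.concaveOn convex_univ)
  have hga : IsMinOn g univ a :=
    hg.isMinOn_of_hasFDerivAt_eq_zero (by simpa using ha.sub f'.hasFDerivAt)
  have hgb : IsMinOn g univ b :=
    hg.isMinOn_of_hasFDerivAt_eq_zero (by simpa using hb.sub f'.hasFDerivAt)
  have hgz : IsMinOn g univ z := fun y _ =>
    (hg.le_on_segment (mem_univ a) (mem_univ b) hzab).trans
      (max_le (hga (mem_univ y)) (hgb (mem_univ y)))
  have hzero : fderiv ℝ f z - f' = 0 :=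
    (hgz.isLocalMin Filter.univ_mem).hasFDerivAt_eq_zero (hz.hasFDerivAt.sub f'.hasFDerivAt)
  exact sub_eq_zero.mp hzero ▸ hz.hasFDerivAt

end FirstOrder

theorem ConvexOn.hasGradientAt_of_mem_segment {F : Type*} [NormedAddCommGroup F]
    [InnerProductSpace ℝ F] [CompleteSpace F] {f : F → ℝ} (hf : ConvexOn ℝ univ f)
    {v a b z : F} (ha : HasGradientAt f v a) (hb : HasGradientAt f v b)
    (hz : DifferentiableAt ℝ f z) (hzab : z ∈ segment ℝ a b) : HasGradientAt f v z :=
  hasGradientAt_iff_hasFDerivAt.mpr <| hf.hasFDerivAt_of_mem_segment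
    (hasGradientAt_iff_hasFDerivAt.mp ha) (hasGradientAt_iff_hasFDerivAt.mp hb) hz hzab

theorem EuclideanSpace.mem_segment_horizontal {x₀ x₁ : ℝ} {p : EuclideanSpace ℝ (Fin 2)}
    (hp : p 0 ∈ Icc x₀ x₁) : p ∈ segment ℝ !₂[x₀, p 1] !₂[x₁, p 1] := by
  rw [← segment_eq_Icc (hp.1.trans hp.2)] at hp
  obtain ⟨s, t, hs, ht, hst, hsp⟩ := hp
  refine ⟨s, t, hs, ht, hst, ?_⟩
  ext i
  fin_cases i
  · simpa using hsp
  · simp [← add_mul, hst]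

theorem gradient_constant_on_rectangle_general
    (k : EuclideanSpace ℝ (Fin 2) → ℝ)
    (hkconvex : ConvexOn ℝ Set.univ k)
    (hkdiff : Differentiable ℝ k)
    (x₀ x₁ y₀ y₁ : ℝ)
    (v : EuclideanSpace ℝ (Fin 2))
    (hbd : ∀ p : EuclideanSpace ℝ (Fin 2),
      p 0 ∈ Set.Icc x₀ x₁ → p 1 ∈ Set.Icc y₀ y₁ →
      (p 0 = x₀ ∨ p 0 = x₁ ∨ p 1 = y₀ ∨ p 1 = y₁) →
      gradient k p = v) :
    ∀ p : EuclideanSpace ℝ (Fin 2),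
      p 0 ∈ Set.Icc x₀ x₁ → p 1 ∈ Set.Icc y₀ y₁ → gradient k p = v := by
  intro p hp0 hp1
  have hx : x₀ ≤ x₁ := hp0.1.trans hp0.2
  have hgrad (q : EuclideanSpace ℝ (Fin 2)) (hq : gradient k q = v) : HasGradientAt k v q :=
    hq ▸ (hkdiff q).hasGradientAt
  have hleft : gradient k !₂[x₀, p 1] = v :=
    hbd _ (by simpa using hx) (by simpa using hp1) (by simp)
  have hright : gradient k !₂[x₁, p 1] = v :=
    hbd _ (by simpa using hx) (by simpa using hp1) (by simp)
  exact (hkconvex.hasGradientAt_of_mem_segment (hgrad _ hleft) (hgrad _ hright) (hkdiff p)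
    (EuclideanSpace.mem_segment_horizontal hp0)).gradient

/-- Lemma A.2 / `lem:box-constant` of the paper.
If a convex differentiable `k : ℝ² → ℝ` has constant gradient `v` on the boundary of
an axis-aligned rectangle, then its gradient equals `v` on the whole rectangle. -/
theorem gradient_constant_on_rectangle
    (k : EuclideanSpace ℝ (Fin 2) → ℝ)
    (hkconvex : ConvexOn ℝ Set.univ k)
    (hkdiff : Differentiable ℝ k)
    (x₀ x₁ y₀ y₁ : ℝ) (hx : x₀ ≤ x₁) (hy : y₀ ≤ y₁)
    (v : EuclideanSpace ℝ (Fin 2))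
    (hbd : ∀ p : EuclideanSpace ℝ (Fin 2),
      p 0 ∈ Set.Icc x₀ x₁ → p 1 ∈ Set.Icc y₀ y₁ →
      (p 0 = x₀ ∨ p 0 = x₁ ∨ p 1 = y₀ ∨ p 1 = y₁) →
      gradient k p = v) :
    ∀ p : EuclideanSpace ℝ (Fin 2),
      p 0 ∈ Set.Icc x₀ x₁ → p 1 ∈ Set.Icc y₀ y₁ → gradient k p = v :=
  gradient_constant_on_rectangle_general k hkconvex hkdiff x₀ x₁ y₀ y₁ v hbd
end

section
/- Define S : ℝ² → ℝ² by S(x, y) = (cos x · sin y + ∫₀ˣ |sin t| dt, − sin x · cos y + ∫₀ʸ |sin t| dt). Let k : ℝ² → ℝ be convex and let G : ℝ² → ℝ² be a map such that for every z ∈ ℝ², G(z) is a subgradient of k at z, and suppose S − G is monotone, i.e., ⟨(S(z) − G(z)) − (S(z') − G(z')), z − z'⟩ ≥ 0 for all z, z' ∈ ℝ². Then k is affine: there exist a ∈ ℝ² and c ∈ ℝ such that k(z) = ⟨a, z⟩ + c for all z ∈ ℝ². -/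
open scoped RealInnerProductSpace

/-- The acyclic component `S` of the Asplund decomposition of the saddle gradient of
`L(x,y) = x² − y² + sin x sin y`. -/
noncomputable def asplundS : EuclideanSpace ℝ (Fin 2) → EuclideanSpace ℝ (Fin 2) :=
  fun p => (WithLp.equiv 2 (Fin 2 → ℝ)).symm
    ![Real.cos (p 0) * Real.sin (p 1) + ∫ t in (0:ℝ)..(p 0), |Real.sin t|,
      -(Real.sin (p 0)) * Real.cos (p 1) + ∫ t in (0:ℝ)..(p 1), |Real.sin t|]

/-!
Write `G = (U, V)`. Since `S - G` is monotone and `⟪S w - S z, w - z⟫ ≤ 3 ‖w - z‖ ^ 2`, the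
Bregman gap `k w - k z - ⟪G z, w - z⟫` lies between `0` and `⟪S w - S z, w - z⟫`. Hence `k` is
differentiable with gradient `G`, and `G` is cocoercive relative to `S`:
`‖G w - G z‖ ^ 2 ≤ 12 ⟪S w - S z, w - z⟫`.

Along the lines `x = iπ`, where `|sin x|` vanishes, `S` is flat to second order in `x`, so `V`
changes only by `O(δ ^ (3/2))` between `x = iπ - δ` and `x = iπ`. Comparing the increments of `k`
along these two vertical lines shows that `U` is constant on each line `x = iπ`. The points
`(iπ, iπ + π/2)` and `((i+1)π, iπ + π/2)` form a null pair for `S`, so all these constants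
coincide, and since `U` is nondecreasing in `x` it is constant. A symmetry of `S` that swaps the
coordinates gives the same result for `V`, and a constant subgradient makes `k` affine.
-/

open Real Filter Set Topology

section SubgradientSummand

variable {E : Type*} [NormedAddCommGroup E] [InnerProductSpace ℝ E] {k : E → ℝ} {G : E → E}

theorem inner_sub_nonneg_of_subgradient (hG : ∀ z w, k z + ⟪G z, w - z⟫ ≤ k w) (z w : E) :
    0 ≤ ⟪G w - G z, w - z⟫ := by
  have h1 := hG z w
  have h2 := hG w z
  rw [← neg_sub w z, inner_neg_right] at h2
  rw [inner_sub_left]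
  linarith

theorem monotone_inner_apply_add_smul (hG : ∀ z w, k z + ⟪G z, w - z⟫ ≤ k w) (a v : E) :
    Monotone fun t : ℝ => ⟪G (a + t • v), v⟫ := by
  intro s t hst
  have h := inner_sub_nonneg_of_subgradient hG (a + s • v) (a + t • v)
  rw [add_sub_add_left_eq_sub, ← sub_smul, inner_smul_right, mul_comm, inner_sub_left] at h
  rcases hst.eq_or_lt with rfl | hlt
  · rfl
  · exact sub_nonneg.mp (nonneg_of_mul_nonneg_left h (sub_pos.mpr hlt))

theorem eq_inner_add_of_forall_eq (hG : ∀ z w, k z + ⟪G z, w - z⟫ ≤ k w) {a : E}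
    (hGa : ∀ z, G z = a) (z : E) : k z = ⟪a, z⟫ + k 0 := by
  have h1 := hG 0 z
  have h2 := hG z 0
  rw [hGa, sub_zero] at h1
  rw [hGa, zero_sub, inner_neg_right] at h2
  linarith

/-- In Asplund's terminology, `T` is acyclic when `IsSubgradientSummand T k G` forces `k` to be
affine. -/
structure IsSubgradientSummand (T : E → E) (k : E → ℝ) (G : E → E) : Prop where
  subgradient : ∀ z w, k z + ⟪G z, w - z⟫ ≤ k w
  monotone_sub : ∀ z w, 0 ≤ ⟪(T z - G z) - (T w - G w), z - w⟫

namespace IsSubgradientSummand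

variable {T : E → E} {L : ℝ}

theorem sub_sub_inner_le (h : IsSubgradientSummand T k G) (z w : E) :
    k w - k z - ⟪G z, w - z⟫ ≤ ⟪T w - T z, w - z⟫ := by
  have h1 := h.subgradient w z
  have h2 := h.monotone_sub w z
  rw [← neg_sub w z, inner_neg_right] at h1
  simp only [inner_sub_left] at h2 ⊢
  linarith

theorem sub_sub_inner_le_sq (h : IsSubgradientSummand T k G)
    (hT : ∀ z w, ⟪T w - T z, w - z⟫ ≤ L * ‖w - z‖ ^ 2) (z w : E) :
    k w - k z - ⟪G z, w - z⟫ ≤ L * ‖w - z‖ ^ 2 :=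
  (h.sub_sub_inner_le z w).trans (hT z w)

theorem sq_norm_sub_le (h : IsSubgradientSummand T k G) (hL : 0 < L)
    (hT : ∀ z w, ⟪T w - T z, w - z⟫ ≤ L * ‖w - z‖ ^ 2) (z w : E) :
    ‖G w - G z‖ ^ 2 ≤ 4 * L * ⟪T w - T z, w - z⟫ := by
  set g := G w - G z
  set s := (2 * L)⁻¹ with hs_def
  -- test the subgradient inequality at `z` and the quadratic upper bound at `w` against the
  -- point `w - s • g`; the step `s = 1 / (2L)` is optimal
  have h1 := h.subgradient z (w - s • g)
  have h2 := h.sub_sub_inner_le_sq hT w (w - s • g)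
  have h3 := h.sub_sub_inner_le z w
  rw [sub_right_comm, inner_sub_right, inner_smul_right] at h1
  rw [sub_sub_cancel_left, norm_neg, norm_smul, inner_neg_right, inner_smul_right,
    Real.norm_of_nonneg (by positivity)] at h2
  have hg : s * ⟪G w, g⟫ - s * ⟪G z, g⟫ = s * ‖g‖ ^ 2 := by
    rw [← mul_sub, ← inner_sub_left, real_inner_self_eq_norm_sq]
  have hs : s - L * s ^ 2 = (4 * L)⁻¹ := by rw [hs_def]; field_simp; ring
  have key : (4 * L)⁻¹ * ‖g‖ ^ 2 ≤ ⟪T w - T z, w - z⟫ := by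
    rw [← hs]; linarith
  rwa [inv_mul_le_iff₀ (by positivity)] at key

theorem hasFDerivAt (h : IsSubgradientSummand T k G)
    (hT : ∀ z w, ⟪T w - T z, w - z⟫ ≤ L * ‖w - z‖ ^ 2) (z : E) :
    HasFDerivAt k (innerSL ℝ (G z)) z := by
  rw [hasFDerivAt_iff_isLittleO]
  refine Asymptotics.IsBigO.trans_isLittleO ?_ (Asymptotics.isLittleO_pow_sub_sub z one_lt_two)
  refine Asymptotics.IsBigO.of_bound L (Eventually.of_forall fun w => ?_)
  rw [innerSL_apply_apply, Real.norm_eq_abs, norm_pow, norm_norm, abs_le]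
  have := h.subgradient z w
  have := h.sub_sub_inner_le_sq hT z w
  constructor <;> nlinarith [sq_nonneg ‖w - z‖]

theorem hasDerivAt_apply_add_smul (h : IsSubgradientSummand T k G)
    (hT : ∀ z w, ⟪T w - T z, w - z⟫ ≤ L * ‖w - z‖ ^ 2) (a v : E) (s : ℝ) :
    HasDerivAt (fun s : ℝ => k (a + s • v)) ⟪G (a + s • v), v⟫ s := by
  have hline : HasDerivAt (fun s : ℝ => a + s • v) v s := by
    simpa using ((hasDerivAt_id s).smul_const v).const_add a
  exact (h.hasFDerivAt hT _).comp_hasDerivAt s hline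

/-- Compares the increments of `k` along the parallel lines `a + ℝ v` and `b + ℝ v`: an integrated
form of the symmetry of the second derivative of `k`. -/
theorem abs_inner_apply_add_smul_sub_le (h : IsSubgradientSummand T k G)
    (hT : ∀ z w, ⟪T w - T z, w - z⟫ ≤ L * ‖w - z‖ ^ 2) {a b v : E} {κ : ℝ}
    (hκ : ∀ s : ℝ, |⟪G (a + s • v) - G (b + s • v), v⟫| ≤ κ) (t : ℝ) :
    |⟪G (a + t • v) - G a, a - b⟫| ≤ κ * |t| + L * ‖a - b‖ ^ 2 := by
  have hderiv : ∀ s : ℝ, HasDerivAt (fun s : ℝ => k (a + s • v) - k (b + s • v))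
      ⟪G (a + s • v) - G (b + s • v), v⟫ s := fun s => by
    rw [inner_sub_left]
    exact (h.hasDerivAt_apply_add_smul hT a v s).sub (h.hasDerivAt_apply_add_smul hT b v s)
  have hmvt := convex_univ.norm_image_sub_le_of_norm_hasDerivWithin_le
    (fun s _ => (hderiv s).hasDerivWithinAt) (fun s _ => hκ s) (mem_univ 0) (mem_univ t)
  simp only [zero_smul, add_zero, Real.norm_eq_abs, sub_zero] at hmvt
  have hgap : ∀ s : ℝ, 0 ≤ ⟪G (a + s • v), a - b⟫ - (k (a + s • v) - k (b + s • v)) ∧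
      ⟪G (a + s • v), a - b⟫ - (k (a + s • v) - k (b + s • v)) ≤ L * ‖a - b‖ ^ 2 := fun s => by
    have hd : b + s • v - (a + s • v) = -(a - b) := by abel
    have h1 := h.subgradient (a + s • v) (b + s • v)
    have h2 := h.sub_sub_inner_le_sq hT (a + s • v) (b + s • v)
    rw [hd, inner_neg_right] at h1 h2
    rw [norm_neg] at h2
    constructor <;> linarith
  have h0 := hgap 0
  have ht := hgap t
  simp only [zero_smul, add_zero] at h0
  rw [inner_sub_left]
  rw [abs_le] at hmvt ⊢
  constructor <;> linarith [hmvt.1, hmvt.2]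

theorem comp (h : IsSubgradientSummand T k G) {T' : E → E} (Q : E ≃ₗᵢ[ℝ] E) (a c : E)
    (hT' : ∀ w, T' w = Q.symm (T (Q w + a)) + c) :
    IsSubgradientSummand T' (fun w => k (Q w + a)) (fun w => Q.symm (G (Q w + a))) where
  subgradient z w := by
    have e : ⟪Q.symm (G (Q z + a)), w - z⟫ = ⟪G (Q z + a), (Q w + a) - (Q z + a)⟫ := by
      rw [add_sub_add_right_eq_sub, ← map_sub, ← Q.inner_map_map, Q.apply_symm_apply]
    rw [e]
    exact h.subgradient _ _
  monotone_sub z w := by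
    have e : (T' z - Q.symm (G (Q z + a))) - (T' w - Q.symm (G (Q w + a))) =
        Q.symm ((T (Q z + a) - G (Q z + a)) - (T (Q w + a) - G (Q w + a))) := by
      rw [hT', hT', map_sub, map_sub, map_sub]
      abel
    have e' : Q (z - w) = (Q z + a) - (Q w + a) := by rw [map_sub]; abel
    rw [e, ← Q.inner_map_map, Q.apply_symm_apply, e']
    exact h.monotone_sub _ _

end IsSubgradientSummand

end SubgradientSummand

theorem Monotone.eq_of_forall_int_mul_eq {f : ℝ → ℝ} (hf : Monotone f) {p c : ℝ} (hp : 0 < p)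
    (h : ∀ i : ℤ, f (i * p) = c) (x : ℝ) : f x = c := by
  have h1 : (⌊x / p⌋ : ℝ) * p ≤ x := (le_div_iff₀ hp).mp (Int.floor_le _)
  have h2 : x ≤ ((⌊x / p⌋ + 1 : ℤ) : ℝ) * p := by
    push_cast
    exact (div_le_iff₀ hp).mp (Int.lt_floor_add_one _).le
  exact le_antisymm (h (⌊x / p⌋ + 1) ▸ hf h2) (h ⌊x / p⌋ ▸ hf h1)

noncomputable def absSinIntegral (x : ℝ) : ℝ := ∫ t in (0 : ℝ)..x, |sin t|

theorem absSinIntegral_of_mem_Icc {x : ℝ} (hx : x ∈ Icc 0 π) :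
    absSinIntegral x = 1 - cos x := by
  have h : EqOn (fun t => |sin t|) sin (uIcc 0 x) := fun t ht => by
    rw [uIcc_of_le hx.1] at ht
    exact abs_of_nonneg (sin_nonneg_of_nonneg_of_le_pi ht.1 (ht.2.trans hx.2))
  rw [absSinIntegral, intervalIntegral.integral_congr h, integral_sin, cos_zero]

theorem absSinIntegral_add_int_mul_pi (x : ℝ) (i : ℤ) :
    absSinIntegral (x + i * π) = absSinIntegral x + 2 * i := by
  have hper : Function.Periodic (fun t => |sin t|) π := fun t => by simp [sin_add_pi]
  have hint : ∀ a b, IntervalIntegrable (fun t => |sin t|) MeasureTheory.volume a b :=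
    fun a b => continuous_sin.abs.intervalIntegrable a b
  have hπ : ∫ t in (0 : ℝ)..π, |sin t| = 2 := by
    rw [← absSinIntegral, absSinIntegral_of_mem_Icc ⟨pi_pos.le, le_rfl⟩, cos_pi]
    ring
  rw [absSinIntegral, absSinIntegral,
    ← intervalIntegral.integral_add_adjacent_intervals (hint 0 x) (hint x _), ← zsmul_eq_mul,
    hper.intervalIntegral_add_zsmul_eq i x hint, hper.intervalIntegral_add_eq x 0, zero_add, hπ,
    zsmul_eq_mul]
  ring

theorem absSinIntegral_add_pi (x : ℝ) : absSinIntegral (x + π) = absSinIntegral x + 2 := by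
  simpa using absSinIntegral_add_int_mul_pi x 1

theorem absSinIntegral_int_mul_pi (i : ℤ) : absSinIntegral (i * π) = 2 * i := by
  simpa [absSinIntegral] using absSinIntegral_add_int_mul_pi 0 i

theorem absSinIntegral_int_mul_pi_sub (i : ℤ) {δ : ℝ} (hδ : δ ∈ Icc 0 π) :
    absSinIntegral (i * π - δ) = 2 * i - 1 + cos δ := by
  have h := absSinIntegral_add_int_mul_pi (π - δ) (i - 1)
  rw [absSinIntegral_of_mem_Icc (x := π - δ) ⟨by linarith [hδ.2], by linarith [hδ.1]⟩,
    cos_pi_sub] at h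
  push_cast at h
  rw [show (i : ℝ) * π - δ = π - δ + (i - 1) * π by ring, h]
  ring

theorem abs_absSinIntegral_sub_le (x y : ℝ) :
    |absSinIntegral x - absSinIntegral y| ≤ |x - y| := by
  rw [absSinIntegral, absSinIntegral, intervalIntegral.integral_interval_sub_left
    (continuous_sin.abs.intervalIntegrable 0 x) (continuous_sin.abs.intervalIntegrable 0 y)]
  simpa [abs_sub_comm y x] using intervalIntegral.norm_integral_le_of_norm_le_const
    (C := 1) (f := fun t => |sin t|) (a := y) (b := x) (fun t _ => by simpa using abs_sin_le_one t)

theorem abs_mul_sub_mul_le {p p' q q' : ℝ} (hp' : |p'| ≤ 1) (hq : |q| ≤ 1) :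
    |p' * q' - p * q| ≤ |p' - p| + |q' - q| := by
  rw [show p' * q' - p * q = p' * (q' - q) + (p' - p) * q by ring]
  refine (abs_add_le _ _).trans ?_
  rw [abs_mul, abs_mul]
  nlinarith [abs_nonneg (q' - q), abs_nonneg (p' - p), abs_nonneg p', abs_nonneg q]

theorem cos_int_mul_pi_sq (i : ℤ) : cos (i * π) ^ 2 = 1 := by
  rw [cos_sq', sin_int_mul_pi]
  ring

local notation "ℝ²" => EuclideanSpace ℝ (Fin 2)

theorem inner_eq_fin_two (u v : ℝ²) : ⟪u, v⟫ = u 0 * v 0 + u 1 * v 1 := by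
  simp [PiLp.inner_apply, Fin.sum_univ_two]
  ring

theorem norm_sq_eq_fin_two (u : ℝ²) : ‖u‖ ^ 2 = u 0 ^ 2 + u 1 ^ 2 := by
  simp [EuclideanSpace.norm_sq_eq, Fin.sum_univ_two]

@[simp]
theorem asplundS_apply_zero (z : ℝ²) :
    asplundS z 0 = cos (z 0) * sin (z 1) + absSinIntegral (z 0) := by
  simp [asplundS, absSinIntegral]

@[simp]
theorem asplundS_apply_one (z : ℝ²) :
    asplundS z 1 = -sin (z 0) * cos (z 1) + absSinIntegral (z 1) := by
  simp [asplundS, absSinIntegral]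

theorem inner_asplundS_sub_le (z w : ℝ²) :
    ⟪asplundS w - asplundS z, w - z⟫ ≤ 3 * ‖w - z‖ ^ 2 := by
  rw [inner_eq_fin_two, norm_sq_eq_fin_two]
  simp only [PiLp.sub_apply]
  set a := w 0 - z 0
  set b := w 1 - z 1
  have hcs : |cos (w 0) * sin (w 1) - cos (z 0) * sin (z 1)| ≤ |a| + |b| :=
    (abs_mul_sub_mul_le (abs_cos_le_one _) (abs_sin_le_one _)).trans
      (add_le_add (abs_cos_sub_cos_le _ _) (abs_sin_sub_sin_le _ _))
  have hsc : |sin (w 0) * cos (w 1) - sin (z 0) * cos (z 1)| ≤ |a| + |b| :=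
    (abs_mul_sub_mul_le (abs_sin_le_one _) (abs_cos_le_one _)).trans
      (add_le_add (abs_sin_sub_sin_le _ _) (abs_cos_sub_cos_le _ _))
  have hx := abs_absSinIntegral_sub_le (w 0) (z 0)
  have hy := abs_absSinIntegral_sub_le (w 1) (z 1)
  have h1 : |asplundS w 0 - asplundS z 0| ≤ 2 * |a| + |b| := by
    rw [asplundS_apply_zero, asplundS_apply_zero, add_sub_add_comm]
    exact (abs_add_le _ _).trans (by linarith)
  have h2 : |asplundS w 1 - asplundS z 1| ≤ |a| + 2 * |b| := by
    rw [asplundS_apply_one, asplundS_apply_one, add_sub_add_comm, neg_mul, neg_mul, neg_sub_neg]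
    refine (abs_add_le _ _).trans ?_
    rw [abs_sub_comm]
    linarith
  have h1' := mul_le_mul_of_nonneg_right h1 (abs_nonneg a)
  have h2' := mul_le_mul_of_nonneg_right h2 (abs_nonneg b)
  rw [← abs_mul] at h1' h2'
  nlinarith [le_abs_self ((asplundS w 0 - asplundS z 0) * a),
    le_abs_self ((asplundS w 1 - asplundS z 1) * b), sq_abs a, sq_abs b, sq_nonneg (|a| - |b|)]

/-- `S` is flat to second order in `x` across the lines `x = iπ`, where `|sin x|` vanishes. -/
theorem inner_asplundS_sub_le_cube (i : ℤ) (y : ℝ) {δ : ℝ} (hδ : δ ∈ Icc 0 π) :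
    ⟪asplundS !₂[i * π, y] - asplundS !₂[i * π - δ, y], !₂[i * π, y] - !₂[i * π - δ, y]⟫ ≤
      δ ^ 3 := by
  have hcos : cos (i * π - δ) = cos (i * π) * cos δ := by
    rw [cos_sub, sin_int_mul_pi]
    ring
  have hup : cos (i * π) * sin y ≤ 1 := by
    nlinarith [cos_int_mul_pi_sq i, sin_sq_le_one y, sq_nonneg (cos (i * π) - sin y)]
  have hlow : -1 ≤ cos (i * π) * sin y := by
    nlinarith [cos_int_mul_pi_sq i, sin_sq_le_one y, sq_nonneg (cos (i * π) + sin y)]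
  have hδ2 : 1 - cos δ ≤ δ ^ 2 / 2 := by linarith [one_sub_sq_div_two_le_cos (x := δ)]
  have hgap := mul_le_mul hδ2 (by linarith : cos (i * π) * sin y + 1 ≤ 2)
    (by linarith) (by positivity)
  rw [inner_eq_fin_two]
  simp only [PiLp.sub_apply, asplundS_apply_zero, asplundS_apply_one, Matrix.cons_val_zero,
    Matrix.cons_val_one, sub_self, mul_zero, add_zero, sub_sub_cancel, hcos,
    absSinIntegral_int_mul_pi, absSinIntegral_int_mul_pi_sub i hδ]
  nlinarith [hδ.1, cos_le_one δ]

theorem inner_asplundS_sub_eq_zero (i : ℤ) :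
    ⟪asplundS !₂[i * π + π, i * π + π / 2] - asplundS !₂[i * π, i * π + π / 2],
      !₂[i * π + π, i * π + π / 2] - !₂[i * π, i * π + π / 2]⟫ = 0 := by
  have h1 : absSinIntegral (i * π + π) = 2 * i + 2 := by
    rw [absSinIntegral_add_pi, absSinIntegral_int_mul_pi]
  rw [inner_eq_fin_two]
  simp [absSinIntegral_int_mul_pi, h1, cos_add_pi, sin_add_pi_div_two]
  linear_combination -2 * cos_int_mul_pi_sq i

noncomputable def swapCoords : ℝ² ≃ₗᵢ[ℝ] ℝ² :=
  LinearIsometryEquiv.piLpCongrLeft 2 ℝ ℝ (Equiv.swap 0 1)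

theorem asplundS_eq_swapCoords_symm (w : ℝ²) :
    asplundS w = swapCoords.symm (asplundS (swapCoords w + !₂[π, 0])) + !₂[0, -2] := by
  ext j
  fin_cases j
  · simp [swapCoords]
    ring
  · simp [swapCoords, absSinIntegral_add_pi]
    ring

namespace IsSubgradientSummand

variable {k : ℝ² → ℝ} {G : ℝ² → ℝ²}

theorem abs_apply_int_mul_pi_sub_le (h : IsSubgradientSummand asplundS k G) (i : ℤ) (y : ℝ)
    {δ : ℝ} (hδ : δ ∈ Ioc 0 π) :
    |G !₂[i * π, y] 0 - G !₂[i * π, 0] 0| ≤ √(12 * δ) * |y| + 3 * δ := by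
  obtain ⟨hδ0, hδπ⟩ := hδ
  have hline : ∀ x s : ℝ, !₂[x, 0] + s • !₂[0, 1] = !₂[x, s] := fun x s => by
    ext j; fin_cases j <;> simp
  have hcross : ∀ s : ℝ, |⟪G (!₂[i * π, 0] + s • !₂[0, 1]) - G (!₂[i * π - δ, 0] + s • !₂[0, 1]),
      !₂[0, 1]⟫| ≤ δ * √(12 * δ) := by
    intro s
    rw [hline, hline]
    have hsq := (h.sq_norm_sub_le three_pos inner_asplundS_sub_le
      !₂[i * π - δ, s] !₂[i * π, s]).trans
      (mul_le_mul_of_nonneg_left (inner_asplundS_sub_le_cube i s ⟨hδ0.le, hδπ⟩) (by norm_num))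
    have hnorm : ‖G !₂[i * π, s] - G !₂[i * π - δ, s]‖ ≤ δ * √(12 * δ) := by
      rw [← pow_le_pow_iff_left₀ (norm_nonneg _) (by positivity) two_ne_zero, mul_pow,
        sq_sqrt (by positivity)]
      linarith
    calc _ ≤ ‖G !₂[i * π, s] - G !₂[i * π - δ, s]‖ * ‖(!₂[0, 1] : ℝ²)‖ :=
          abs_real_inner_le_norm _ _
      _ ≤ δ * √(12 * δ) := by simpa [EuclideanSpace.norm_eq] using hnorm
  have hloop := h.abs_inner_apply_add_smul_sub_le inner_asplundS_sub_le hcross y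
  rw [hline, inner_eq_fin_two, norm_sq_eq_fin_two] at hloop
  simp only [PiLp.sub_apply, Matrix.cons_val_zero, Matrix.cons_val_one, sub_sub_cancel, sub_self,
    mul_zero, add_zero, zero_pow two_ne_zero, abs_mul, abs_of_pos hδ0] at hloop
  refine le_of_mul_le_mul_right ?_ hδ0
  linarith

theorem apply_int_mul_pi_eq (h : IsSubgradientSummand asplundS k G) (i : ℤ) (y : ℝ) :
    G !₂[i * π, y] 0 = G !₂[i * π, 0] 0 := by
  have hlim : Tendsto (fun δ => √(12 * δ) * |y| + 3 * δ) (𝓝[>] 0) (𝓝 0) := by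
    have hcont : Continuous fun δ : ℝ => √(12 * δ) * |y| + 3 * δ := by fun_prop
    simpa using (hcont.tendsto 0).mono_left nhdsWithin_le_nhds
  have hle := ge_of_tendsto hlim (by
    filter_upwards [Ioo_mem_nhdsGT pi_pos] with δ hδ
    exact h.abs_apply_int_mul_pi_sub_le i y ⟨hδ.1, hδ.2.le⟩)
  exact sub_eq_zero.mp (abs_nonpos_iff.mp hle)

theorem apply_int_mul_pi_add_pi (h : IsSubgradientSummand asplundS k G) (i : ℤ) :
    G !₂[i * π + π, i * π + π / 2] = G !₂[i * π, i * π + π / 2] := by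
  have hsq := h.sq_norm_sub_le three_pos inner_asplundS_sub_le
    !₂[i * π, i * π + π / 2] !₂[i * π + π, i * π + π / 2]
  rw [inner_asplundS_sub_eq_zero, mul_zero] at hsq
  exact sub_eq_zero.mp (norm_eq_zero.mp
    ((pow_eq_zero_iff two_ne_zero).mp (le_antisymm hsq (sq_nonneg _))))

theorem apply_int_mul_pi (h : IsSubgradientSummand asplundS k G) (i : ℤ) (y : ℝ) :
    G !₂[i * π, y] 0 = G 0 0 := by
  have hper : Function.Periodic (fun i : ℤ => G !₂[i * π, 0] 0) 1 := fun i => by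
    show G !₂[((i + 1 : ℤ) : ℝ) * π, 0] 0 = G !₂[i * π, 0] 0
    rw [← h.apply_int_mul_pi_eq (i + 1) (i * π + π / 2),
      ← h.apply_int_mul_pi_eq i (i * π + π / 2), ← h.apply_int_mul_pi_add_pi i]
    push_cast
    ring_nf
  have h00 : (!₂[0, 0] : ℝ²) = 0 := by ext j; fin_cases j <;> simp
  rw [h.apply_int_mul_pi_eq, ← h00]
  simpa using hper.int_mul_eq i

theorem apply_zero_eq (h : IsSubgradientSummand asplundS k G) (z : ℝ²) : G z 0 = G 0 0 := by
  have hline : ∀ x : ℝ, ⟪G (!₂[0, z 1] + x • !₂[1, 0]), !₂[1, 0]⟫ = G !₂[x, z 1] 0 := fun x => by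
    have e : !₂[0, z 1] + x • !₂[1, 0] = !₂[x, z 1] := by ext j; fin_cases j <;> simp
    rw [e, inner_eq_fin_two]
    simp
  have hmono : Monotone fun x : ℝ => G !₂[x, z 1] 0 := by
    simpa only [hline] using monotone_inner_apply_add_smul h.subgradient !₂[0, z 1] !₂[1, 0]
  have hz : z = !₂[z 0, z 1] := by ext j; fin_cases j <;> simp
  rw [hz]
  exact hmono.eq_of_forall_int_mul_eq pi_pos (fun i => h.apply_int_mul_pi i (z 1)) (z 0)

theorem apply_one_eq (h : IsSubgradientSummand asplundS k G) (z : ℝ²) : G z 1 = G 0 1 := by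
  set a : ℝ² := !₂[π, 0]
  have h' := h.comp swapCoords a !₂[0, -2] asplundS_eq_swapCoords_symm
  have key : ∀ w, G (swapCoords w + a) 1 = G a 1 := fun w => by
    simpa [swapCoords] using h'.apply_zero_eq w
  calc G z 1 = G (swapCoords (swapCoords.symm (z - a)) + a) 1 := by simp
    _ = G (swapCoords (swapCoords.symm (0 - a)) + a) 1 := by rw [key, key]
    _ = G 0 1 := by simp

end IsSubgradientSummand

theorem asplundS_acyclic_general
    (k : EuclideanSpace ℝ (Fin 2) → ℝ)
    (G : EuclideanSpace ℝ (Fin 2) → EuclideanSpace ℝ (Fin 2))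
    (hG : ∀ z w : EuclideanSpace ℝ (Fin 2), k w ≥ k z + ⟪G z, w - z⟫)
    (hmono : ∀ z z' : EuclideanSpace ℝ (Fin 2),
      ⟪(asplundS z - G z) - (asplundS z' - G z'), z - z'⟫ ≥ 0) :
    ∃ (a : EuclideanSpace ℝ (Fin 2)) (c : ℝ),
      ∀ z : EuclideanSpace ℝ (Fin 2), k z = ⟪a, z⟫ + c := by
  have h : IsSubgradientSummand asplundS k G := ⟨hG, hmono⟩
  have hconst : ∀ z, G z = G 0 := fun z => by
    ext j
    fin_cases j
    · exact h.apply_zero_eq z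
    · exact h.apply_one_eq z
  exact ⟨G 0, k 0, eq_inner_add_of_forall_eq hG hconst⟩

/-- acyclicity of `S`, key content of Theorem 2.4 / `thm:sincoupling`.
If `k : ℝ² → ℝ` is convex, `G` is a selection of subgradients of `k`, and `S − G` is
monotone, then `k` is affine. -/
theorem asplundS_acyclic
    (k : EuclideanSpace ℝ (Fin 2) → ℝ)
    (hkconvex : ConvexOn ℝ Set.univ k)
    (G : EuclideanSpace ℝ (Fin 2) → EuclideanSpace ℝ (Fin 2))
    (hG : ∀ z w : EuclideanSpace ℝ (Fin 2), k w ≥ k z + ⟪G z, w - z⟫)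
    (hmono : ∀ z z' : EuclideanSpace ℝ (Fin 2),
      ⟪(asplundS z - G z) - (asplundS z' - G z'), z - z'⟫ ≥ 0) :
    ∃ (a : EuclideanSpace ℝ (Fin 2)) (c : ℝ),
      ∀ z : EuclideanSpace ℝ (Fin 2), k z = ⟪a, z⟫ + c :=
  asplundS_acyclic_general k G hG hmono
end

section
/- The operator S : ℝ² → ℝ² defined by S(x, y) = (cos x · sin y + ∫₀ˣ |sin t| dt, − sin x · cos y + ∫₀ʸ |sin t| dt) is monotone: for all z, z' ∈ ℝ², ⟨S(z) − S(z'), z − z'⟩ ≥ 0. -/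
/-!
The Jacobian of `S` at `(x, y)` is `diag(|sin x| - sin x sin y, |sin y| + sin x sin y)` plus an
antisymmetric matrix, so its quadratic form is nonnegative since `|sin x sin y| ≤ |sin x|, |sin y|`.
A map whose derivative has nonnegative quadratic form is monotone: along the segment from `z'` to
`z`, the function `t ↦ ⟪S (z' + t (z - z')), z - z'⟫` is nondecreasing.
-/

open scoped RealInnerProductSpace

theorem inner_sub_nonneg_of_hasFDerivAt {E : Type*} [NormedAddCommGroup E]
    [InnerProductSpace ℝ E] {f : E → E} {f' : E → E →L[ℝ] E}
    (hf : ∀ x, HasFDerivAt f (f' x) x) (hf' : ∀ x v, 0 ≤ ⟪f' x v, v⟫) (x y : E) :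
    0 ≤ ⟪f x - f y, x - y⟫ := by
  set φ : ℝ → ℝ := fun t => ⟪f (y + t • (x - y)), x - y⟫
  have hφ (t : ℝ) : HasDerivAt φ ⟪f' (y + t • (x - y)) (x - y), x - y⟫ t := by
    have hsegment : HasDerivAt (fun t : ℝ => y + t • (x - y)) (x - y) t := by
      simpa using ((hasDerivAt_id t).smul_const (x - y)).const_add y
    simpa using ((hf _).comp_hasDerivAt t hsegment).inner ℝ (hasDerivAt_const t (x - y))
  have hφ_mono : φ 0 ≤ φ 1 := monotone_of_deriv_nonneg (fun t => (hφ t).differentiableAt)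
    (fun t => (hφ t).deriv ▸ hf' _ _) zero_le_one
  simpa [φ, inner_sub_left] using hφ_mono

theorem mul_le_abs_of_abs_le_one {α : Type*} [Ring α] [LinearOrder α] [IsOrderedRing α]
    {a b : α} (hb : |b| ≤ 1) : a * b ≤ |a| :=
  (le_abs_self _).trans <| (abs_mul a b).trans_le <| mul_le_of_le_one_right (abs_nonneg a) hb

open Real

noncomputable def asplundJacobian (p : EuclideanSpace ℝ (Fin 2)) : Matrix (Fin 2) (Fin 2) ℝ :=
  !![|sin (p 0)| - sin (p 0) * sin (p 1), cos (p 0) * cos (p 1);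
    -(cos (p 0) * cos (p 1)), |sin (p 1)| + sin (p 0) * sin (p 1)]

theorem hasFDerivAt_asplundS (p : EuclideanSpace ℝ (Fin 2)) :
    HasFDerivAt asplundS (Matrix.toEuclideanCLM (𝕜 := ℝ) (asplundJacobian p)) p := by
  have hF (u : ℝ) : HasDerivAt (fun u => ∫ t in (0:ℝ)..u, |sin t|) |sin u| u :=
    (continuous_sin.abs.integral_hasStrictDerivAt 0 u).hasDerivAt
  have h₀ := PiLp.hasFDerivAt_apply (𝕜 := ℝ) 2 p 0
  have h₁ := PiLp.hasFDerivAt_apply (𝕜 := ℝ) 2 p 1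
  rw [← hasFDerivWithinAt_univ, hasFDerivWithinAt_piLp]
  intro i
  fin_cases i <;> refine HasFDerivAt.hasFDerivWithinAt ?_
  · convert (((hasDerivAt_cos _).comp_hasFDerivAt p h₀).mul
      ((hasDerivAt_sin _).comp_hasFDerivAt p h₁)).add ((hF _).comp_hasFDerivAt p h₀) using 1
    · funext v; simp [asplundS]
    · ext v
      simp only [asplundJacobian, ContinuousLinearMap.comp_apply, PiLp.proj_apply,
        Matrix.ofLp_toEuclideanCLM, Matrix.mulVec, dotProduct, Matrix.of_apply, Matrix.cons_val',
        Matrix.cons_val_fin_one, Matrix.cons_val_zero, Matrix.cons_val_one, Fin.sum_univ_two,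
        Function.comp_apply, Fin.zero_eta, add_apply,
        smul_apply, smul_eq_mul, neg_smul, smul_neg,
        neg_apply]
      ring
  · convert ((((hasDerivAt_sin _).comp_hasFDerivAt p h₀).neg.mul
      ((hasDerivAt_cos _).comp_hasFDerivAt p h₁)).add ((hF _).comp_hasFDerivAt p h₁)) using 1
    · funext v; simp [asplundS]
    · ext v
      simp only [asplundJacobian, ContinuousLinearMap.comp_apply, PiLp.proj_apply,
        Matrix.ofLp_toEuclideanCLM, Matrix.mulVec, dotProduct, Matrix.of_apply, Matrix.cons_val',
        Matrix.cons_val_fin_one, Matrix.cons_val_zero, Matrix.cons_val_one, Fin.sum_univ_two,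
        Function.comp_apply, Fin.mk_one, Pi.neg_apply, add_apply,
        smul_apply, smul_eq_mul, neg_smul, smul_neg, neg_neg,
        neg_apply]
      ring

theorem inner_toEuclideanCLM_asplundJacobian_self_nonneg (p v : EuclideanSpace ℝ (Fin 2)) :
    0 ≤ ⟪Matrix.toEuclideanCLM (𝕜 := ℝ) (asplundJacobian p) v, v⟫ := by
  have h₀ : sin (p 0) * sin (p 1) ≤ |sin (p 0)| := mul_le_abs_of_abs_le_one (abs_sin_le_one _)
  have h₁ : sin (p 1) * -sin (p 0) ≤ |sin (p 1)| :=
    mul_le_abs_of_abs_le_one ((abs_neg _).trans_le (abs_sin_le_one _))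
  rw [real_inner_comm, Matrix.inner_toEuclideanCLM]
  simp only [asplundJacobian, dotProduct, Matrix.mulVec, Matrix.of_apply, Matrix.cons_val',
    Matrix.cons_val_fin_one, Matrix.cons_val_zero, Matrix.cons_val_one, Fin.sum_univ_two]
  nlinarith [mul_nonneg (sub_nonneg.2 h₀) (sq_nonneg (v 0)),
    mul_nonneg (sub_nonneg.2 h₁) (sq_nonneg (v 1))]

/-- the operator `S` is monotone. -/
theorem asplundS_monotone :
    ∀ z z' : EuclideanSpace ℝ (Fin 2), ⟪asplundS z - asplundS z', z - z'⟫ ≥ 0 :=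
  inner_sub_nonneg_of_hasFDerivAt hasFDerivAt_asplundS
    inner_toEuclideanCLM_asplundJacobian_self_nonneg
end
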